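/- arXiv:2602.10444 — 4 statements merged into one kernel-verified Lean document; each statement's English description precedes it below -/
import Mathlib

section
/- Consider the six vertices of a regular hexagon inscribed in the unit circle in the Euclidean plane, p_k = (cos(kπ/3), sin(kπ/3)) for k = 0, 1, 2, 3, 4, 5, and set A = {p_0, p_1}, B = {p_2, p_3}, C = {p_4, p_5}. Then Ch(C, A ∪ B) = 2 while Ch(C, A) = Ch(C, B) = 1 + √3; in particular Ch(C, A ∪ B) < min(Ch(C, A), Ch(C, B)), so Chamfer-linkage is not a reducible linkage function. -/
set_option maxHeartbeats 1000000

noncomputable instance : DecidableEq (EuclideanSpace ℝ (Fin 2)) := Classical.decEq _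

/-- The Chamfer distance from a finite set `A` to a finite nonempty set `B`:
`Ch(A, B) = Σ_{a ∈ A} min_{b ∈ B} d(a, b)`. -/
noncomputable def chamfer {X : Type*} [MetricSpace X] (A B : Finset X)
    (hB : B.Nonempty) : ℝ :=
  ∑ a ∈ A, B.inf' hB fun b => dist a b

/-- The `k`-th vertex of the regular hexagon inscribed in the unit circle:
`p_k = (cos(kπ/3), sin(kπ/3))`. -/
noncomputable def hexP (k : ℕ) : EuclideanSpace ℝ (Fin 2) :=
  (WithLp.equiv 2 (Fin 2 → ℝ)).symm ![Real.cos (k * Real.pi / 3), Real.sin (k * Real.pi / 3)]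

open Real in
lemma dist_hex (i j : ℕ) : dist (hexP i) (hexP j) =
    Real.sqrt ((cos (i*π/3) - cos (j*π/3))^2 + (sin (i*π/3) - sin (j*π/3))^2) := by
  have h : ∀ k : ℕ, ∀ m : Fin 2, (hexP k) m = ![cos (k*π/3), sin (k*π/3)] m := fun _ _ => rfl
  rw [EuclideanSpace.dist_eq, Fin.sum_univ_two, h, h, h, h]
  simp [Real.dist_eq, sq_abs]

open Real in
lemma cos_sin_vals :
    cos ((0:ℕ)*π/3) = 1 ∧ sin ((0:ℕ)*π/3) = 0 ∧
    cos ((1:ℕ)*π/3) = 1/2 ∧ sin ((1:ℕ)*π/3) = sqrt 3/2 ∧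
    cos ((2:ℕ)*π/3) = -(1/2) ∧ sin ((2:ℕ)*π/3) = sqrt 3/2 ∧
    cos ((3:ℕ)*π/3) = -1 ∧ sin ((3:ℕ)*π/3) = 0 ∧
    cos ((4:ℕ)*π/3) = -(1/2) ∧ sin ((4:ℕ)*π/3) = -(sqrt 3/2) ∧
    cos ((5:ℕ)*π/3) = 1/2 ∧ sin ((5:ℕ)*π/3) = -(sqrt 3/2) := by
  have e2 : ((2:ℕ):ℝ)*π/3 = π - π/3 := by push_cast; ring
  have e3 : ((3:ℕ):ℝ)*π/3 = π := by push_cast; ring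
  have e4 : ((4:ℕ):ℝ)*π/3 = π + π/3 := by push_cast; ring
  have e5 : ((5:ℕ):ℝ)*π/3 = 2*π - π/3 := by push_cast; ring
  refine ⟨by norm_num, by norm_num, ?_, ?_, ?_, ?_, ?_, ?_, ?_, ?_, ?_, ?_⟩
  · norm_num [Real.cos_pi_div_three]
  · norm_num [Real.sin_pi_div_three]
  · rw [e2, Real.cos_pi_sub, Real.cos_pi_div_three]
  · rw [e2, Real.sin_pi_sub, Real.sin_pi_div_three]
  · rw [e3, Real.cos_pi]
  · rw [e3, Real.sin_pi]
  · rw [e4]; simp [Real.cos_add, Real.cos_pi_div_three]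
  · rw [e4]; simp [Real.sin_add, Real.sin_pi_div_three]
  · rw [e5, Real.cos_two_pi_sub, Real.cos_pi_div_three]
  · rw [e5, Real.sin_two_pi_sub, Real.sin_pi_div_three]

lemma sq3 : Real.sqrt 3 ^ 2 = 3 := Real.sq_sqrt (by norm_num)

lemma sqrt_eq_of {x c : ℝ} (hc : 0 ≤ c) (h : x = c^2) : Real.sqrt x = c := by
  rw [h, Real.sqrt_sq hc]

lemma dists :
    dist (hexP 4) (hexP 0) = Real.sqrt 3 ∧ dist (hexP 4) (hexP 1) = 2 ∧
    dist (hexP 4) (hexP 2) = Real.sqrt 3 ∧ dist (hexP 4) (hexP 3) = 1 ∧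
    dist (hexP 5) (hexP 0) = 1 ∧ dist (hexP 5) (hexP 1) = Real.sqrt 3 ∧
    dist (hexP 5) (hexP 2) = 2 ∧ dist (hexP 5) (hexP 3) = Real.sqrt 3 := by
  obtain ⟨c0,s0,c1,s1,c2,s2,c3,s3,c4,s4,c5,s5⟩ := cos_sin_vals
  have h3 := sq3
  refine ⟨?_,?_,?_,?_,?_,?_,?_,?_⟩ <;>
    rw [dist_hex] <;>
    simp only [c0,s0,c1,s1,c2,s2,c3,s3,c4,s4,c5,s5] <;>
    refine sqrt_eq_of (by positivity) (by nlinarith [h3])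

lemma hexP_ne45 : hexP 4 ≠ hexP 5 := by
  intro h
  have h0 : (hexP 4) (0 : Fin 2) = (hexP 5) (0 : Fin 2) := by rw [h]
  obtain ⟨_,_,_,_,_,_,_,_,c4,_,c5,_⟩ := cos_sin_vals
  have e4 : (hexP 4) (0 : Fin 2) = Real.cos ((4:ℕ)*Real.pi/3) := rfl
  have e5 : (hexP 5) (0 : Fin 2) = Real.cos ((5:ℕ)*Real.pi/3) := rfl
  rw [e4, e5, c4, c5] at h0
  norm_num at h0

/-- With `A = {p₀, p₁}`, `B = {p₂, p₃}`, `C = {p₄, p₅}` the vertices of a regular hexagon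
inscribed in the unit circle, `Ch(C, A ∪ B) = 2` while `Ch(C, A) = Ch(C, B) = 1 + √3`;
in particular `Ch(C, A ∪ B) < min (Ch(C, A)) (Ch(C, B))`, so Chamfer-linkage is not a
reducible linkage function. -/
theorem chamfer_not_reducible :
    chamfer {hexP 4, hexP 5} ({hexP 0, hexP 1} ∪ {hexP 2, hexP 3})
        ((Finset.insert_nonempty _ _).inl) = 2 ∧
    chamfer {hexP 4, hexP 5} {hexP 0, hexP 1} (Finset.insert_nonempty _ _)
        = 1 + Real.sqrt 3 ∧
    chamfer {hexP 4, hexP 5} {hexP 2, hexP 3} (Finset.insert_nonempty _ _)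
        = 1 + Real.sqrt 3 ∧
    chamfer {hexP 4, hexP 5} ({hexP 0, hexP 1} ∪ {hexP 2, hexP 3})
        ((Finset.insert_nonempty _ _).inl)
      < min (chamfer {hexP 4, hexP 5} {hexP 0, hexP 1} (Finset.insert_nonempty _ _))
          (chamfer {hexP 4, hexP 5} {hexP 2, hexP 3} (Finset.insert_nonempty _ _)) := by
  obtain ⟨d40,d41,d42,d43,d50,d51,d52,d53⟩ := dists
  have h3 := sq3
  have hs3 : (1:ℝ) < Real.sqrt 3 := by nlinarith [Real.sqrt_nonneg 3]
  have hs3' : Real.sqrt 3 ≤ 2 := by nlinarith [Real.sqrt_nonneg 3]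
  have hne45 := hexP_ne45
  have key : ∀ f : EuclideanSpace ℝ (Fin 2) → ℝ,
      ∑ a ∈ ({hexP 4, hexP 5} : Finset (EuclideanSpace ℝ (Fin 2))), f a
        = f (hexP 4) + f (hexP 5) :=
    fun f => Finset.sum_pair hne45
  have hU : ({hexP 0, hexP 1} ∪ {hexP 2, hexP 3} : Finset (EuclideanSpace ℝ (Fin 2)))
      = insert (hexP 0) (insert (hexP 1) {hexP 2, hexP 3}) := by
    ext x; simp; tauto
  have hA : chamfer {hexP 4, hexP 5} {hexP 0, hexP 1} (Finset.insert_nonempty _ _)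
      = 1 + Real.sqrt 3 := by
    rw [chamfer, key]
    simp [Finset.inf'_insert, d40, d41, d50, d51]
    rw [min_eq_left hs3']
    ring
  have hB : chamfer {hexP 4, hexP 5} {hexP 2, hexP 3} (Finset.insert_nonempty _ _)
      = 1 + Real.sqrt 3 := by
    rw [chamfer, key]
    simp [Finset.inf'_insert, d42, d43, d52, d53]
    linarith
  have hAB : chamfer {hexP 4, hexP 5} ({hexP 0, hexP 1} ∪ {hexP 2, hexP 3})
      ((Finset.insert_nonempty _ _).inl) = 2 := by
    rw [chamfer]
    simp_rw [hU]
    rw [key]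
    simp [Finset.inf'_insert, d40, d41, d42, d43, d50, d51, d52, d53]
    linarith
  refine ⟨hAB, hA, hB, ?_⟩
  rw [hAB, hA, hB, min_self]
  linarith
end

section
/- In the real line ℝ with distance d(x, y) = |x − y|, let C = {0, 3}, A = {1/10}, and B = {29/10}. Then the symmetric Chamfer distance satisfies Ch_S(C, A ∪ B) = 2/5 while Ch_S(C, A) = Ch_S(C, B) = 31/10; in particular Ch_S(C, A ∪ B) < min(Ch_S(C, A), Ch_S(C, B)), so symmetric Chamfer-linkage is not a reducible linkage function. -/
/-- The symmetric Chamfer distance: `Ch_S(A, B) = Ch(A, B) + Ch(B, A)`. -/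
noncomputable def chamferS {X : Type*} [MetricSpace X] (A B : Finset X)
    (hA : A.Nonempty) (hB : B.Nonempty) : ℝ :=
  chamfer A B hB + chamfer B A hA

/-!
Adding the far point `29/10` to the cluster `{1/10}` gives each of `0` and `3` a partner at
distance `1/10`, so both directed Chamfer terms drop to `1/5`. Against a single cluster point,
one of `0, 3` is at distance `29/10`, which dominates `Ch_S`.
-/

section Chamfer

variable {X : Type*} [MetricSpace X]

theorem chamfer_singleton_right (A : Finset X) (b : X) :
    chamfer A {b} (Finset.singleton_nonempty b) = ∑ a ∈ A, dist a b := by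
  simp only [chamfer, Finset.inf'_singleton]

theorem chamfer_pair_left [DecidableEq X] {a a' : X} (h : a ≠ a') (B : Finset X)
    (hB : B.Nonempty) :
    chamfer {a, a'} B hB = B.inf' hB (dist a) + B.inf' hB (dist a') :=
  Finset.sum_pair h

theorem chamferS_singleton_right (A : Finset X) (hA : A.Nonempty) (b : X) :
    chamferS A {b} hA (Finset.singleton_nonempty b) =
      ∑ a ∈ A, dist a b + A.inf' hA (dist b) := by
  rw [chamferS, chamfer_singleton_right, chamfer, Finset.sum_singleton]

end Chamfer

/-- In `ℝ` with `d(x, y) = |x − y|`, for `C = {0, 3}`, `A = {1/10}`, `B = {29/10}`,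
one has `Ch_S(C, A ∪ B) = 2/5` while `Ch_S(C, A) = Ch_S(C, B) = 31/10`; in particular
`Ch_S(C, A ∪ B) < min (Ch_S(C, A)) (Ch_S(C, B))`, so symmetric Chamfer-linkage is not a
reducible linkage function. -/
theorem chamferS_not_reducible :
    chamferS ({0, 3} : Finset ℝ) (({1/10} : Finset ℝ) ∪ ({29/10} : Finset ℝ))
        (Finset.insert_nonempty _ _) ((Finset.singleton_nonempty _).inl) = 2/5 ∧
    chamferS ({0, 3} : Finset ℝ) ({1/10} : Finset ℝ)
        (Finset.insert_nonempty _ _) (Finset.singleton_nonempty _) = 31/10 ∧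
    chamferS ({0, 3} : Finset ℝ) ({29/10} : Finset ℝ)
        (Finset.insert_nonempty _ _) (Finset.singleton_nonempty _) = 31/10 ∧
    chamferS ({0, 3} : Finset ℝ) (({1/10} : Finset ℝ) ∪ ({29/10} : Finset ℝ))
        (Finset.insert_nonempty _ _) ((Finset.singleton_nonempty _).inl)
      < min (chamferS ({0, 3} : Finset ℝ) ({1/10} : Finset ℝ)
              (Finset.insert_nonempty _ _) (Finset.singleton_nonempty _))
            (chamferS ({0, 3} : Finset ℝ) ({29/10} : Finset ℝ)
              (Finset.insert_nonempty _ _) (Finset.singleton_nonempty _)) := by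
  have hUnion : chamferS ({0, 3} : Finset ℝ) (({1/10} : Finset ℝ) ∪ ({29/10} : Finset ℝ))
      (Finset.insert_nonempty _ _) ((Finset.singleton_nonempty _).inl) = 2/5 := by
    simp only [← Finset.insert_eq, chamferS]
    rw [chamfer_pair_left (by norm_num : (0 : ℝ) ≠ 3),
      chamfer_pair_left (by norm_num : (1/10 : ℝ) ≠ 29/10)]
    norm_num [Finset.inf'_insert, Real.dist_eq, abs_of_nonneg, abs_of_nonpos]
  have hA : chamferS ({0, 3} : Finset ℝ) ({1/10} : Finset ℝ)
      (Finset.insert_nonempty _ _) (Finset.singleton_nonempty _) = 31/10 := by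
    rw [chamferS_singleton_right, Finset.sum_pair (by norm_num)]
    norm_num [Finset.inf'_insert, Real.dist_eq, abs_of_nonneg, abs_of_nonpos]
  have hB : chamferS ({0, 3} : Finset ℝ) ({29/10} : Finset ℝ)
      (Finset.insert_nonempty _ _) (Finset.singleton_nonempty _) = 31/10 := by
    rw [chamferS_singleton_right, Finset.sum_pair (by norm_num)]
    norm_num [Finset.inf'_insert, Real.dist_eq, abs_of_nonneg, abs_of_nonpos]
  refine ⟨hUnion, hA, hB, ?_⟩
  rw [hUnion, hA, hB]
  norm_num
end

section
/- The symmetric Chamfer distance does not satisfy the merge-monotonicity property enjoyed by the asymmetric Chamfer distance: there exist pairwise disjoint finite nonempty subsets A, B, C of ℝ (with distance d(x, y) = |x − y|) such that Ch_S(C, A ∪ B) > min(Ch_S(C, A), Ch_S(C, B)). Concretely, for C = {0}, A = {1}, B = {100}, one has Ch_S(C, A ∪ B) = 102 while min(Ch_S(C, A), Ch_S(C, B)) = 2. -/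
/-! Merging a far-away set `B` into `A` cannot help the direction `Ch(A ∪ B, C)`: every point of
`B` still pays its distance to `C`. With `C = {0}`, `A = {1}`, `B = {100}` the merged cost is
`1 + 1 + 100`, whereas `Ch_S(C, A) = 2`. -/

section

variable {X : Type*} [MetricSpace X]

theorem chamfer_union_left [DecidableEq X] {A B : Finset X} (C : Finset X) (hC : C.Nonempty)
    (hAB : Disjoint A B) : chamfer (A ∪ B) C hC = chamfer A C hC + chamfer B C hC :=
  Finset.sum_union hAB

theorem chamfer_union_right [DecidableEq X] (C : Finset X) {A B : Finset X} (hA : A.Nonempty)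
    (hB : B.Nonempty) :
    chamfer C (A ∪ B) (hA.mono Finset.subset_union_left) =
      ∑ c ∈ C, min (A.inf' hA (dist c)) (B.inf' hB (dist c)) :=
  Finset.sum_congr rfl fun _ _ => Finset.inf'_union hA hB _

theorem chamfer_singleton_singleton (a b : X) :
    chamfer {a} {b} (Finset.singleton_nonempty b) = dist a b := by
  simp [chamfer]

theorem chamferS_singleton_singleton (a b : X) :
    chamferS {a} {b} (Finset.singleton_nonempty a) (Finset.singleton_nonempty b) =
      2 * dist a b := by
  rw [chamferS, chamfer_singleton_singleton, chamfer_singleton_singleton, dist_comm b a]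
  ring

theorem chamferS_singleton_union_singleton [DecidableEq X] {a b : X} (c : X) (hab : a ≠ b) :
    chamferS {c} ({a} ∪ {b}) (Finset.singleton_nonempty c)
        ((Finset.singleton_nonempty a).mono Finset.subset_union_left) =
      min (dist c a) (dist c b) + dist a c + dist b c := by
  rw [chamferS, chamfer_union_right _ (Finset.singleton_nonempty a) (Finset.singleton_nonempty b),
    chamfer_union_left _ _ (Finset.disjoint_singleton.mpr hab),
    chamfer_singleton_singleton, chamfer_singleton_singleton]
  simp only [Finset.sum_singleton, Finset.inf'_singleton]
  ring

end

/-- The symmetric Chamfer distance does not satisfy merge-monotonicity: there are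
pairwise disjoint finite nonempty subsets `A`, `B`, `C` of `ℝ` with
`Ch_S(C, A ∪ B) > min (Ch_S(C, A)) (Ch_S(C, B))`.  Concretely, for `C = {0}`, `A = {1}`,
`B = {100}`, one has `Ch_S(C, A ∪ B) = 102` while
`min (Ch_S(C, A)) (Ch_S(C, B)) = 2`. -/
theorem chamferS_not_merge_monotone :
    (∃ (A B C : Finset ℝ) (hA : A.Nonempty) (hB : B.Nonempty) (hC : C.Nonempty),
      Disjoint A B ∧ Disjoint A C ∧ Disjoint B C ∧
      chamferS C (A ∪ B) hC (hA.inl) > min (chamferS C A hC hA) (chamferS C B hC hB)) ∧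
    chamferS ({0} : Finset ℝ) (({1} : Finset ℝ) ∪ ({100} : Finset ℝ))
        (Finset.singleton_nonempty _) ((Finset.singleton_nonempty _).inl) = 102 ∧
    min (chamferS ({0} : Finset ℝ) ({1} : Finset ℝ)
          (Finset.singleton_nonempty _) (Finset.singleton_nonempty _))
        (chamferS ({0} : Finset ℝ) ({100} : Finset ℝ)
          (Finset.singleton_nonempty _) (Finset.singleton_nonempty _)) = 2 := by
  have merged : chamferS ({0} : Finset ℝ) ({1} ∪ {100}) (Finset.singleton_nonempty _)
      ((Finset.singleton_nonempty _).inl) = 102 := by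
    rw [chamferS_singleton_union_singleton _ (by norm_num)]
    norm_num [Real.dist_eq]
  have separate : min (chamferS ({0} : Finset ℝ) {1} (Finset.singleton_nonempty _)
      (Finset.singleton_nonempty _)) (chamferS ({0} : Finset ℝ) {100}
      (Finset.singleton_nonempty _) (Finset.singleton_nonempty _)) = 2 := by
    rw [chamferS_singleton_singleton, chamferS_singleton_singleton]
    norm_num [Real.dist_eq]
  refine ⟨⟨{1}, {100}, {0}, Finset.singleton_nonempty _, Finset.singleton_nonempty _,
    Finset.singleton_nonempty _, by norm_num, by norm_num, by norm_num, ?_⟩, merged, separate⟩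
  rw [merged, separate]
  norm_num
end

section
/- The normalized symmetric Chamfer distance does not satisfy the merge-monotonicity property enjoyed by the asymmetric Chamfer distance: there exist pairwise disjoint finite nonempty subsets A, B, C of ℝ (with distance d(x, y) = |x − y|) such that Ch_NS(C, A ∪ B) > min(Ch_NS(C, A), Ch_NS(C, B)). Concretely, for C = {0}, A = {1}, B = {100}, one has Ch_NS(C, A ∪ B) = 103/2 while min(Ch_NS(C, A), Ch_NS(C, B)) = 2. -/
/-- The normalized symmetric Chamfer distance:
`Ch_NS(A, B) = Ch(A, B)/|A| + Ch(B, A)/|B|`. -/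
noncomputable def chamferNS {X : Type*} [MetricSpace X] (A B : Finset X)
    (hA : A.Nonempty) (hB : B.Nonempty) : ℝ :=
  chamfer A B hB / A.card + chamfer B A hA / B.card

open Finset

section

variable {X : Type*} [MetricSpace X]

theorem chamferNS_singleton_left (c : X) (B : Finset X) (hc : ({c} : Finset X).Nonempty)
    (hB : B.Nonempty) :
    chamferNS {c} B hc hB = B.inf' hB (dist c) + (∑ b ∈ B, dist b c) / B.card := by
  simp only [chamferNS, chamfer, sum_singleton, inf'_singleton, card_singleton, Nat.cast_one,
    div_one]

theorem chamferNS_singleton_singleton (a b : X) (ha : ({a} : Finset X).Nonempty)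
    (hb : ({b} : Finset X).Nonempty) :
    chamferNS {a} {b} ha hb = 2 * dist a b := by
  rw [chamferNS_singleton_left, inf'_singleton, sum_singleton, card_singleton, Nat.cast_one,
    div_one, dist_comm b a, two_mul]

theorem chamferNS_singleton_union_singleton [DecidableEq X] {a b : X} (hab : a ≠ b) (c : X)
    (hc : ({c} : Finset X).Nonempty) (hab' : ({a} ∪ {b} : Finset X).Nonempty) :
    chamferNS {c} ({a} ∪ {b}) hc hab' = min (dist c a) (dist c b) + (dist a c + dist b c) / 2 := by
  have hpair : ({a} ∪ {b} : Finset X) = {a, b} := rfl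
  rw [chamferNS_singleton_left, inf'_union (singleton_nonempty a) (singleton_nonempty b),
    inf'_singleton, inf'_singleton, hpair, sum_pair hab, card_pair hab, Nat.cast_two]

end

/-- The normalized symmetric Chamfer distance does not satisfy merge-monotonicity:
there are pairwise disjoint finite nonempty subsets `A`, `B`, `C` of `ℝ` with
`Ch_NS(C, A ∪ B) > min (Ch_NS(C, A)) (Ch_NS(C, B))`.  Concretely, for `C = {0}`,
`A = {1}`, `B = {100}`, one has `Ch_NS(C, A ∪ B) = 103/2` while
`min (Ch_NS(C, A)) (Ch_NS(C, B)) = 2`. -/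
theorem chamferNS_not_merge_monotone :
    (∃ (A B C : Finset ℝ) (hA : A.Nonempty) (hB : B.Nonempty) (hC : C.Nonempty),
      Disjoint A B ∧ Disjoint A C ∧ Disjoint B C ∧
      chamferNS C (A ∪ B) hC (hA.inl) > min (chamferNS C A hC hA) (chamferNS C B hC hB)) ∧
    chamferNS ({0} : Finset ℝ) (({1} : Finset ℝ) ∪ ({100} : Finset ℝ))
        (Finset.singleton_nonempty _) ((Finset.singleton_nonempty _).inl) = 103/2 ∧
    min (chamferNS ({0} : Finset ℝ) ({1} : Finset ℝ)
          (Finset.singleton_nonempty _) (Finset.singleton_nonempty _))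
        (chamferNS ({0} : Finset ℝ) ({100} : Finset ℝ)
          (Finset.singleton_nonempty _) (Finset.singleton_nonempty _)) = 2 := by
  have hunion : chamferNS ({0} : Finset ℝ) (({1} : Finset ℝ) ∪ ({100} : Finset ℝ))
      (Finset.singleton_nonempty _) ((Finset.singleton_nonempty _).inl) = 103 / 2 := by
    rw [chamferNS_singleton_union_singleton (show (1 : ℝ) ≠ 100 by norm_num)]
    norm_num [Real.dist_eq]
  have hmin : min (chamferNS ({0} : Finset ℝ) ({1} : Finset ℝ)
        (Finset.singleton_nonempty _) (Finset.singleton_nonempty _))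
      (chamferNS ({0} : Finset ℝ) ({100} : Finset ℝ)
        (Finset.singleton_nonempty _) (Finset.singleton_nonempty _)) = 2 := by
    simp only [chamferNS_singleton_singleton]
    norm_num [Real.dist_eq]
  refine ⟨⟨{1}, {100}, {0}, singleton_nonempty _, singleton_nonempty _, singleton_nonempty _,
    by norm_num, by norm_num, by norm_num, ?_⟩, hunion, hmin⟩
  rw [hunion, hmin]
  norm_num
end
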